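/- With (ℓ_k), (L_k) as above (every word of L_{k+1} is a concatenation of words of L_k), the nested intersection X := ⋂_{k≥0} ⟨L_k⟩ equals the subshift Σ¹(A, F) where F = ⨆_{k≥0} F_k and F_k is the set of words of length ℓ_k that are not subwords of the concatenation of two words of L_k. -/

import Mathlib

/-!
A point of `⟨L_k⟩` is a concatenation of `L_k`-words along a grid of period `ℓ_k`, so each of
its windows of length `ℓ_k` straddles two consecutive grid words: it avoids `F`.
Conversely, iterating the concatenation hypothesis, every word of `L_k` with `k ≥ j` lies in the
Kleene star `L_j∗`. If `x` avoids `F_k`, its window `[-n, -n + ℓ_k)` is a factor of some `u v`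
with `u, v ∈ L_k`, hence of a word of `L_j∗`, whose factorisation cuts the window into `L_j`-words
along a grid of period `ℓ_j` with phase in `[0, ℓ_j)`. Taking `k` large, for each `n` some phase
works on `[-n, n]`; by pigeonhole one phase works for infinitely many `n`, i.e. on all of `ℤ`.
-/

/-- The word of length `ℓ` read in the configuration `x : ℤ → A` starting at
position `s`. -/
def blockAt {A : Type*} (x : ℤ → A) (s : ℤ) (ℓ : ℕ) : List A :=
  (List.range ℓ).map fun r => x (s + r)

/-- The one-dimensional concatenated subshift `⟨L⟩` of a dictionary `L` of
words of length `ℓ`: configurations which, for some offset `u ∈ [0,ℓ)`, are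
the infinite concatenation of words of `L` along the grid `u + ℓℤ`. -/
def concatShift {A : Type*} (L : Set (List A)) (ℓ : ℕ) : Set (ℤ → A) :=
  {x | ∃ u : ℤ, 0 ≤ u ∧ u < (ℓ : ℤ) ∧ ∀ v : ℤ, blockAt x (u + (ℓ : ℤ) * v) ℓ ∈ L}

section

open Computability

lemma le_kstar_of_le_kstar_succ {α : Type*} [KleeneAlgebra α] {a : ℕ → α}
    (h : ∀ k, a (k + 1) ≤ (a k)∗) {j k : ℕ} (hjk : j ≤ k) : a k ≤ (a j)∗ := by
  induction k, hjk using Nat.le_induction with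
  | base => exact le_kstar
  | succ k _ ih =>
    calc a (k + 1) ≤ (a k)∗ := h k
      _ ≤ (a j)∗∗ := kstar_mono ih
      _ = (a j)∗ := kstar_idem _

variable {A : Type*}

-- The definition of `blockAt` coerces `List.range n` to a `List ℤ` through the list monad.
lemma blockAt_eq_map (x : ℤ → A) (s : ℤ) (n : ℕ) :
    blockAt x s n = (List.range n).map fun r : ℕ => x (s + r) := by
  simp [blockAt, ← List.map_eq_flatMap]

@[simp]
lemma length_blockAt (x : ℤ → A) (s : ℤ) (n : ℕ) : (blockAt x s n).length = n := by
  simp [blockAt_eq_map]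

lemma blockAt_add (x : ℤ → A) (s : ℤ) (m n : ℕ) :
    blockAt x s (m + n) = blockAt x s m ++ blockAt x (s + m) n := by
  simp [blockAt_eq_map, List.range_add, add_assoc]

lemma blockAt_eq_append_append (x : ℤ → A) (s : ℤ) {d m N : ℕ} (h : d + m ≤ N) :
    blockAt x s N =
      blockAt x s d ++ blockAt x (s + d) m ++ blockAt x (s + d + m) (N - (d + m)) := by
  rw [← blockAt_add, add_assoc s, ← Nat.cast_add, ← blockAt_add, Nat.add_sub_cancel' h]

lemma blockAt_infix_blockAt (x : ℤ → A) (s : ℤ) {d m N : ℕ} (h : d + m ≤ N) :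
    blockAt x (s + d) m <:+: blockAt x s N :=
  ⟨_, _, (blockAt_eq_append_append x s h).symm⟩

lemma Language.mem_of_append_append_mem_kstar {l : Language A} {m : ℕ} (hm : 0 < m)
    (hl : ∀ w ∈ l, w.length = m) {p b q : List A} (h : p ++ b ++ q ∈ l∗)
    (hp : m ∣ p.length) (hb : b.length = m) : b ∈ l := by
  obtain ⟨ws, hws, hmem⟩ := Language.mem_kstar.1 h
  clear h
  induction ws generalizing p with
  | nil =>
    have := congrArg List.length hws
    simp only [List.length_append, List.flatten_nil, List.length_nil] at this
    omega
  | cons v ws ih =>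
    have hv : v.length = m := hl v (hmem v List.mem_cons_self)
    rw [List.flatten_cons] at hws
    rcases Nat.eq_zero_or_pos p.length with hp0 | hp0
    · rw [List.length_eq_zero_iff.1 hp0, List.nil_append] at hws
      rw [List.append_inj_left hws (hb.trans hv.symm)]
      exact hmem v List.mem_cons_self
    · have hmp : m ≤ p.length := Nat.le_of_dvd hp0 hp
      refine ih (p := p.drop m) (by rw [List.length_drop]; exact Nat.dvd_sub hp dvd_rfl) ?_
        fun w hw => hmem w (List.mem_cons_of_mem v hw)
      have := congrArg (List.drop m) hws
      rwa [List.drop_left' hv, List.append_assoc, List.drop_append_of_le_length hmp,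
        ← List.append_assoc] at this

lemma Language.append_mem_kstar_of_le {l : ℕ → Language A}
    (hconcat : ∀ k, ∀ w ∈ l (k + 1), ∃ ws : List (List A), (∀ v ∈ ws, v ∈ l k) ∧ ws.flatten = w)
    {j k : ℕ} (hjk : j ≤ k) {u v : List A} (hu : u ∈ l k) (hv : v ∈ l k) : u ++ v ∈ (l j)∗ := by
  have hstar : l k ≤ (l j)∗ := le_kstar_of_le_kstar_succ (fun i w hw => by
    obtain ⟨ws, hws, rfl⟩ := hconcat i w hw
    exact Language.join_mem_kstar hws) hjk
  exact kstar_mul_kstar (l j) ▸ Language.append_mem_mul (hstar hu) (hstar hv)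

lemma exists_phase_of_blockAt_infix {l : Language A} {m : ℕ} (hm : 0 < m)
    (hl : ∀ w ∈ l, w.length = m) {x : ℤ → A} {s : ℤ} {N : ℕ} {w : List A}
    (hw : w ∈ l∗) (hinf : blockAt x s N <:+: w) :
    ∃ u < m, ∀ t : ℤ, s ≤ t → t + m ≤ s + N → t ≡ u [ZMOD m] → blockAt x t m ∈ l := by
  obtain ⟨P, Q, rfl⟩ := hinf
  -- `c` is the position in `x` at which the word `P ++ blockAt x s N ++ Q` starts.
  set c : ℤ := s - P.length
  have hc : ((c % m).toNat : ℤ) = c % m := Int.toNat_of_nonneg (Int.emod_nonneg _ (by omega))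
  have hcm : c % m < m := Int.emod_lt_of_pos _ (by omega)
  refine ⟨(c % m).toNat, by omega, fun t hst htN htu => ?_⟩
  obtain ⟨d, rfl⟩ : ∃ d : ℕ, t = s + d := ⟨(t - s).toNat, by omega⟩
  have hdvd : (m : ℤ) ∣ ((P.length + d : ℕ) : ℤ) := by
    have := (htu.trans (hc ▸ Int.mod_modEq c m)).dvd
    rwa [show c - (s + d) = -((P.length + d : ℕ) : ℤ) by push_cast; omega, dvd_neg] at this
  refine Language.mem_of_append_append_mem_kstar hm hl (p := P ++ blockAt x s d)
    (q := blockAt x (s + d + m) (N - (d + m)) ++ Q) ?_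
    (by simpa using Int.natCast_dvd_natCast.1 hdvd) (length_blockAt ..)
  rw [blockAt_eq_append_append x s (d := d) (m := m) (by omega)] at hw
  simpa only [List.append_assoc] using hw

lemma exists_infix_append_of_mem_concatShift {L : Set (List A)} {ℓ : ℕ} {x : ℤ → A}
    (hx : x ∈ concatShift L ℓ) (s : ℤ) : ∃ u ∈ L, ∃ v ∈ L, blockAt x s ℓ <:+: u ++ v := by
  obtain ⟨u, hu0, huℓ, hmem⟩ := hx
  have hq := Int.emod_add_mul_ediv (s - u) ℓ
  set q := (s - u) / ℓ
  have hr0 : 0 ≤ (s - u) % ℓ := Int.emod_nonneg _ (by omega)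
  have hrℓ : (s - u) % ℓ < ℓ := Int.emod_lt_of_pos _ (by omega)
  obtain ⟨d, hd⟩ : ∃ d : ℕ, s = u + ℓ * q + d := ⟨((s - u) % ℓ).toNat, by omega⟩
  refine ⟨_, hmem q, _, hmem (q + 1), ?_⟩
  rw [show u + ℓ * (q + 1) = u + ℓ * q + ℓ by ring, ← blockAt_add, hd]
  exact blockAt_infix_blockAt x _ (by omega)

lemma mem_concatShift_of_forall_exists_phase {L : Set (List A)} {m : ℕ} {x : ℤ → A}
    (h : ∀ n : ℕ, ∃ u < m, ∀ t : ℤ, -n ≤ t → t ≤ n → t ≡ u [ZMOD m] → blockAt x t m ∈ L) :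
    x ∈ concatShift L m := by
  choose g hgm hg using h
  -- Pigeonhole: one phase serves arbitrarily large windows.
  obtain ⟨u, hu⟩ := Finite.exists_infinite_fiber fun n => (⟨g n, hgm n⟩ : Fin m)
  refine ⟨u, by positivity, by exact_mod_cast u.isLt, fun v => ?_⟩
  obtain ⟨n, hn, hnv⟩ := (Set.infinite_coe_iff.mp hu).exists_gt (u + m * v : ℤ).natAbs
  have hgn : g n = u := congrArg Fin.val hn
  exact hg n _ (by omega) (by omega) (by rw [hgn]; exact Int.modEq_add_fac_self)

end

/-- Under the concatenation hypothesis, the nested intersection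
`X = ⋂_k ⟨L_k⟩` equals the subshift `Σ¹(A, F)` where `F = ⋃_k F_k` and `F_k`
is the set of words of length `ℓ_k` that are not subwords of a concatenation
of two words of `L_k`. -/
theorem stmt_12 {A : Type*} (ℓ : ℕ → ℕ) (hmono : StrictMono ℓ) (hpos : ∀ k, 0 < ℓ k)
    (L : ℕ → Set (List A))
    (hlen : ∀ k, ∀ w ∈ L k, w.length = ℓ k)
    (hconcat : ∀ k, ∀ w ∈ L (k + 1),
      ∃ ws : List (List A), (∀ v ∈ ws, v ∈ L k) ∧ ws.flatten = w) :
    (⋂ k, concatShift (L k) (ℓ k)) =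
      {x : ℤ → A | ∀ (k : ℕ) (w : List A), w.length = ℓ k →
        (¬ ∃ u ∈ L k, ∃ v ∈ L k, w <:+: (u ++ v)) →
        ∀ s : ℤ, blockAt x s (ℓ k) ≠ w} := by
  ext x
  rw [Set.mem_iInter]
  constructor
  · rintro hx k w - hw s rfl
    exact hw (exists_infix_append_of_mem_concatShift (hx k) s)
  · intro hx j
    refine mem_concatShift_of_forall_exists_phase fun n => ?_
    set k := j + (2 * n + ℓ j)
    obtain ⟨u, hu, v, hv, hinf⟩ : ∃ u ∈ L k, ∃ v ∈ L k, blockAt x (-n) (ℓ k) <:+: u ++ v := by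
      by_contra hno
      exact hx k _ (length_blockAt ..) hno (-n) rfl
    have huv := Language.append_mem_kstar_of_le (l := L) hconcat (by omega : j ≤ k) hu hv
    have hk : 2 * n + ℓ j ≤ ℓ k := (Nat.le_add_left _ j).trans hmono.le_apply
    obtain ⟨c, hc, hphase⟩ := exists_phase_of_blockAt_infix (hpos j) (hlen j) huv hinf
    exact ⟨c, hc, fun t ht₁ ht₂ => hphase t ht₁ (by omega)⟩
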